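/- Suppose G satisfies the curvature-dimension inequality CD(m,κ) and f : V → ℝ satisfies −Δf(x) = λ f(x) for all x ∈ V. Then for every real number α and every vertex x ∈ V, −Δ(|∇f|² + α λ f²)(x) ≤ (2λ − αλ − 2κ) |∇f|²(x) + (2α − 4/m) λ² f²(x). -/

import Mathlib

open Finset

/-- The weighted degree `d(x) = Σ_y w(x,y)`. -/
noncomputable def deg {V : Type*} [Fintype V] (w : V → V → ℝ) (x : V) : ℝ :=
  ∑ y, w x y

/-- The graph Laplacian `Δf(x) = (1/d(x)) Σ_y w(x,y) (f(y) − f(x))`. -/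
noncomputable def lap {V : Type*} [Fintype V] (w : V → V → ℝ) (f : V → ℝ) (x : V) : ℝ :=
  (1 / deg w x) * ∑ y, w x y * (f y - f x)

/-- The bilinear operator `Γ(f,g)(x) = (1/2)(Δ(fg)(x) − f(x)Δg(x) − g(x)Δf(x))`. -/
noncomputable def gam {V : Type*} [Fintype V] (w : V → V → ℝ) (f g : V → ℝ) (x : V) : ℝ :=
  (1 / 2) * (lap w (fun y => f y * g y) x - f x * lap w g x - g x * lap w f x)

/-- The curvature operator `Γ₂(f,g)(x) = (1/2)(ΔΓ(f,g)(x) − Γ(f,Δg)(x) − Γ(g,Δf)(x))`. -/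
noncomputable def gam2 {V : Type*} [Fintype V] (w : V → V → ℝ) (f g : V → ℝ) (x : V) : ℝ :=
  (1 / 2) * (lap w (gam w f g) x - gam w f (lap w g) x - gam w g (lap w f) x)

/-- The gradient square `|∇f|²(x) = (1/d(x)) Σ_y w(x,y) (f(x) − f(y))²`. -/
noncomputable def gradsq {V : Type*} [Fintype V] (w : V → V → ℝ) (f : V → ℝ) (x : V) : ℝ :=
  (1 / deg w x) * ∑ y, w x y * (f x - f y) ^ 2

/-- The curvature-dimension inequality `CD(m,κ)`. -/
def CD {V : Type*} [Fintype V] (w : V → V → ℝ) (m κ : ℝ) : Prop :=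
  ∀ (f : V → ℝ) (x : V), gam2 w f f x ≥ (1 / m) * (lap w f x) ^ 2 + κ * gam w f f x

/-! For an eigenfunction, `Γ(f, Δf) = -λ Γ(f, f)`, so the Bochner-type identity
`Δ|∇f|² = 4 Γ₂(f, f) + 4 Γ(f, Δf)` becomes `Δ|∇f|² = 4 Γ₂(f, f) - 2λ |∇f|²`, and
`Δ(f²) = |∇f|² + 2 f Δf = |∇f|² - 2λ f²`. Substituting both into `-Δ(|∇f|² + αλ f²)`, the
only remaining term is `-4 Γ₂(f, f)`, which `CD(m, κ)` bounds by
`-(4/m) λ² f² - 2κ |∇f|²`. -/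

section Laplacian

variable {V : Type*} [Fintype V] (w : V → V → ℝ)

lemma lap_add (g h : V → ℝ) (x : V) :
    lap w (fun y => g y + h y) x = lap w g x + lap w h x := by
  simp only [lap, ← mul_add, ← Finset.sum_add_distrib]
  congr 1
  exact Finset.sum_congr rfl fun y _ => by ring

lemma lap_const_mul (c : ℝ) (g : V → ℝ) (x : V) :
    lap w (fun y => c * g y) x = c * lap w g x := by
  simp only [lap, Finset.mul_sum]
  exact Finset.sum_congr rfl fun y _ => by ring

lemma gam_self (f : V → ℝ) (x : V) : gam w f f x = gradsq w f x / 2 := by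
  have hsum : ∑ y, w x y * (f y * f y - f x * f x)
      = ∑ y, w x y * (f x - f y) ^ 2 + 2 * f x * ∑ y, w x y * (f y - f x) := by
    rw [Finset.mul_sum, ← Finset.sum_add_distrib]
    exact Finset.sum_congr rfl fun y _ => by ring
  simp only [gam, lap, gradsq, hsum]
  ring

lemma lap_sq (f : V → ℝ) (x : V) :
    lap w (fun y => f y ^ 2) x = gradsq w f x + 2 * f x * lap w f x := by
  have h := gam_self w f x
  simp only [gam, ← sq] at h
  linarith

lemma gam_const_mul_right (c : ℝ) (f g : V → ℝ) (x : V) :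
    gam w f (fun y => c * g y) x = c * gam w f g x := by
  have hprod : (fun y => f y * (c * g y)) = fun y => c * (f y * g y) :=
    funext fun y => by ring
  simp only [gam, hprod, lap_const_mul]
  ring

lemma lap_gradsq (f : V → ℝ) (x : V) :
    lap w (gradsq w f) x = 4 * gam2 w f f x + 4 * gam w f (lap w f) x := by
  have hgrad : gradsq w f = fun y => 2 * gam w f f y :=
    funext fun y => by rw [gam_self]; ring
  rw [hgrad, lap_const_mul, gam2]
  ring

lemma gam_lap_of_eigen {lam : ℝ} {f : V → ℝ} (hf : ∀ x, -lap w f x = lam * f x) (x : V) :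
    gam w f (lap w f) x = -lam * gradsq w f x / 2 := by
  have hlap : lap w f = fun y => -lam * f y := funext fun y => by linarith [hf y]
  rw [hlap, gam_const_mul_right, gam_self]
  ring

end Laplacian

theorem lap_combination_bound_general {V : Type*} [Fintype V] (w : V → V → ℝ)
    (m κ : ℝ) (hCD : CD w m κ)
    (lam : ℝ) (f : V → ℝ) (hf : ∀ x, -lap w f x = lam * f x)
    (α : ℝ) (x : V) :
    -lap w (fun y => gradsq w f y + α * lam * f y ^ 2) x ≤
      (2 * lam - α * lam - 2 * κ) * gradsq w f x + (2 * α - 4 / m) * lam ^ 2 * f x ^ 2 := by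
  have hlapx : lap w f x = -lam * f x := by linarith [hf x]
  have hCDx := hCD f x
  rw [gam_self, hlapx] at hCDx
  rw [lap_add, lap_const_mul, lap_gradsq, lap_sq, gam_lap_of_eigen w hf, hlapx]
  have hdim : 4 / m * (lam ^ 2 * f x ^ 2) = 4 * (1 / m * (-lam * f x) ^ 2) := by ring
  linarith [hCDx, hdim]

theorem lap_combination_bound {V : Type*} [Fintype V] (w : V → V → ℝ)
    (hsymm : ∀ x y, w x y = w y x) (hnonneg : ∀ x y, 0 ≤ w x y)
    (hloop : ∀ x, w x x = 0) (hdeg : ∀ x, 0 < deg w x)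
    (m κ : ℝ) (hm : 0 < m) (hCD : CD w m κ)
    (lam : ℝ) (f : V → ℝ) (hf : ∀ x, -lap w f x = lam * f x)
    (α : ℝ) (x : V) :
    -lap w (fun y => gradsq w f y + α * lam * f y ^ 2) x ≤
      (2 * lam - α * lam - 2 * κ) * gradsq w f x + (2 * α - 4 / m) * lam ^ 2 * f x ^ 2 :=
  lap_combination_bound_general w m κ hCD lam f hf α x
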